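/- A set S ⊆ ℤ is a set of recurrence if and only if for every δ > 0 there is a finite set contained in S which is a set of δ-recurrence. -/

import Mathlib

/-- A measure preserving system: a probability space `(X, μ)` together with an
invertible measure preserving transformation `T : X → X`. -/
structure MPSystem where
  X : Type
  [mX : MeasurableSpace X]
  μ : MeasureTheory.Measure X
  prob : MeasureTheory.IsProbabilityMeasure μ
  T : X ≃ᵐ X
  mp : MeasureTheory.MeasurePreserving T μ μ

attribute [instance] MPSystem.mX

open MeasureTheory Filter

namespace MPSystem

/-- The `n`-th iterate `Tⁿ` of the transformation, for `n : ℤ`. -/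
def iter (𝒮 : MPSystem) (n : ℤ) : 𝒮.X → 𝒮.X :=
  fun x => ((𝒮.T.toEquiv : Equiv.Perm 𝒮.X) ^ n) x

/-- The system is ergodic: every measurable `D` with `μ(D △ T⁻¹D) = 0` has measure `0` or `1`. -/
def IsErgodic (𝒮 : MPSystem) : Prop :=
  ∀ D : Set 𝒮.X, MeasurableSet D → 𝒮.μ (symmDiff D (𝒮.T ⁻¹' D)) = 0 →
    𝒮.μ D = 0 ∨ 𝒮.μ D = 1

/-- The product system `(X × X, μ × μ, T × T)`. -/
noncomputable def prod (𝒮 : MPSystem) : MPSystem where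
  X := 𝒮.X × 𝒮.X
  μ := 𝒮.μ.prod 𝒮.μ
  prob := by have := 𝒮.prob; infer_instance
  T := 𝒮.T.prodCongr 𝒮.T
  mp := by have := 𝒮.prob; exact 𝒮.mp.prod 𝒮.mp

/-- The system is weak mixing: the product system `(X×X, μ×μ, T×T)` is ergodic. -/
def WeakMixing (𝒮 : MPSystem) : Prop := 𝒮.prod.IsErgodic

/-- The system is nontrivial: some measurable `D` has `μ(D △ T⁻¹D) > 0`. -/
def Nontrivial (𝒮 : MPSystem) : Prop :=
  ∃ D : Set 𝒮.X, MeasurableSet D ∧ 0 < 𝒮.μ (symmDiff D (𝒮.T ⁻¹' D))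

end MPSystem

/-- `S ⊆ ℤ` is a set of recurrence: for every measure preserving system and every
measurable `D` with `μ(D) > 0`, there is `n ∈ S` with `μ(D ∩ TⁿD) > 0`. -/
def IsRecurrenceSet (S : Set ℤ) : Prop :=
  ∀ (𝒮 : MPSystem) (D : Set 𝒮.X), MeasurableSet D → 0 < 𝒮.μ D →
    ∃ n ∈ S, 0 < 𝒮.μ (D ∩ 𝒮.iter n '' D)

/-- `S ⊆ ℤ` is measure expanding: every translate `S + m` is a set of recurrence. -/
def MeasureExpanding (S : Set ℤ) : Prop :=
  ∀ m : ℤ, IsRecurrenceSet ((fun s => s + m) '' S)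

/-- `S` is a set of `δ`-recurrence: for every measure preserving system and every
measurable `D` with `μ(D) > δ`, there is `n ∈ S` with `μ(D ∩ TⁿD) > 0`. -/
def IsDeltaRecurrenceSet (δ : ℝ) (S : Set ℤ) : Prop :=
  ∀ (𝒮 : MPSystem) (D : Set 𝒮.X), MeasurableSet D → ENNReal.ofReal δ < 𝒮.μ D →
    ∃ n ∈ S, 0 < 𝒮.μ (D ∩ 𝒮.iter n '' D)

/-- `S` (an infinite set) is a set of rigidity for the system `𝒮`:
for every measurable `D` and every `ε > 0`, `{n ∈ S : μ(D △ TⁿD) > ε}` is finite. -/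
def IsRigiditySetFor (S : Set ℤ) (𝒮 : MPSystem) : Prop :=
  S.Infinite ∧ ∀ D : Set 𝒮.X, MeasurableSet D → ∀ ε : ℝ, 0 < ε →
    {n ∈ S | ENNReal.ofReal ε < 𝒮.μ (symmDiff D (𝒮.iter n '' D))}.Finite

/-- `S` is a set of strong recurrence. -/
def IsStrongRecurrenceSet (S : Set ℤ) : Prop :=
  ∀ (𝒮 : MPSystem) (D : Set 𝒮.X), MeasurableSet D → 0 < 𝒮.μ D →
    ∃ c : ℝ, 0 < c ∧ {n ∈ S | ENNReal.ofReal c < 𝒮.μ (D ∩ 𝒮.iter n '' D)}.Infinite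

/-- `S` is a set of strong recurrence for weak mixing systems. -/
def IsStrongRecurrenceSetForWeakMixing (S : Set ℤ) : Prop :=
  ∀ (𝒮 : MPSystem), 𝒮.WeakMixing → ∀ (D : Set 𝒮.X), MeasurableSet D → 0 < 𝒮.μ D →
    ∃ c : ℝ, 0 < c ∧ {n ∈ S | ENNReal.ofReal c < 𝒮.μ (D ∩ 𝒮.iter n '' D)}.Infinite

/-- The circle group `𝕋 = ℝ/ℤ`. -/
abbrev 𝕋 : Type := UnitAddCircle

/-- The character `e : 𝕋 → S¹ ⊆ ℂ`, `e(x) = exp(2πi x̃)` where `x̃` is a real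
representative of `x`. -/
noncomputable def e (x : 𝕋) : ℂ := (AddCircle.toCircle x : ℂ)

/-- A tuple `α ∈ 𝕋^d` is independent if the only integer solution of
`n₁α₁ + ⋯ + n_dα_d = 0` is `n₁ = ⋯ = n_d = 0`. -/
def IndepTuple {d : ℕ} (α : Fin d → 𝕋) : Prop :=
  ∀ n : Fin d → ℤ, (∑ j, n j • α j) = 0 → ∀ j, n j = 0

/-- The Bohr set `Bohr(α, η) = {n ∈ ℤ : max_j ‖nαⱼ‖ < η}`. -/
def BohrSet {d : ℕ} (α : Fin d → 𝕋) (η : ℝ) : Set ℤ :=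
  {n : ℤ | ∀ j, ‖n • α j‖ < η}

/-- The Bohr–Hamming neighborhood `BH(α; ε, η) = {n ∈ ℤ : #{j : ‖nαⱼ‖ < ε} ≥ (1-η)d}`. -/
def BHNbhd {d : ℕ} (α : Fin d → 𝕋) (ε η : ℝ) : Set ℤ :=
  {n : ℤ | (1 - η) * d ≤ ({j : Fin d | ‖n • α j‖ < ε}.ncard : ℝ)}

/-- The upper Banach density of `A ⊆ ℤ`:
`d*(A) = lim_k sup_n |A ∩ {n+1,…,n+k}|/k` (realized as a `limsup`). -/
noncomputable def upperBanachDensity (A : Set ℤ) : ℝ :=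
  Filter.limsup
    (fun k : ℕ => ⨆ n : ℤ, ((A ∩ Set.Icc (n + 1) (n + k)).ncard : ℝ) / k) Filter.atTop

/-!
If `S` is a set of recurrence but no finite subset of `S` is a set of `δ`-recurrence, then for
every `k` there are a system and a set `D_k` with `μ(D_k) > δ` and `μ(D_k ∩ TⁿD_k) = 0` for all
`n ∈ S` with `|n| ≤ k`. Coding each point by the times at which its orbit visits `D_k` turns these
into shift-invariant probability measures on the compact space `{0,1}^ℤ`. A weak* limit point of
them is again shift-invariant; since cylinder sets are clopen, it gives the cylinder `{ω₀ = 1}`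
measure at least `δ` and each of its returns at times `n ∈ S` measure `0`, so `S` is not a set of
recurrence. The converse is immediate.
-/
open MeasureTheory Filter Set Topology

namespace MPSystem

variable (𝒮 : MPSystem)

lemma iter_zero_apply (x : 𝒮.X) : 𝒮.iter 0 x = x := rfl

lemma iter_one_apply (x : 𝒮.X) : 𝒮.iter 1 x = 𝒮.T x := rfl

lemma iter_neg_one_apply (x : 𝒮.X) : 𝒮.iter (-1) x = 𝒮.T.symm x := rfl

lemma iter_add_apply (m n : ℤ) (x : 𝒮.X) : 𝒮.iter (m + n) x = 𝒮.iter m (𝒮.iter n x) := by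
  simp only [iter, zpow_add, Equiv.Perm.mul_apply]

lemma measurable_iter (n : ℤ) : Measurable (𝒮.iter n) := by
  induction n using Int.induction_on with
  | zero => exact measurable_id
  | succ k ih =>
    have hk : 𝒮.iter (k + 1) = 𝒮.iter k ∘ 𝒮.T := funext fun x => 𝒮.iter_add_apply k 1 x
    exact hk ▸ ih.comp 𝒮.T.measurable
  | pred k ih =>
    have hk : 𝒮.iter (-k - 1) = 𝒮.iter (-k) ∘ 𝒮.T.symm :=
      funext fun x => 𝒮.iter_add_apply (-k) (-1) x
    exact hk ▸ ih.comp 𝒮.T.symm.measurable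

lemma image_iter (n : ℤ) (D : Set 𝒮.X) : 𝒮.iter n '' D = 𝒮.iter (-n) ⁻¹' D := by
  change ⇑((𝒮.T.toEquiv : Equiv.Perm 𝒮.X) ^ n) '' D = ⇑((𝒮.T.toEquiv : Equiv.Perm 𝒮.X) ^ (-n)) ⁻¹' D
  rw [Equiv.image_eq_preimage_symm, zpow_neg]
  rfl

lemma inter_image_iter_zero (D : Set 𝒮.X) : D ∩ 𝒮.iter 0 '' D = D := by
  rw [image_iter, neg_zero]
  exact inter_self D

end MPSystem

def leftShift : (ℤ → Bool) ≃ᵐ (ℤ → Bool) where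
  toFun ω n := ω (n + 1)
  invFun ω n := ω (n - 1)
  left_inv ω := funext fun n => by simp
  right_inv ω := funext fun n => by simp
  measurable_toFun := measurable_pi_lambda _ fun n => measurable_pi_apply (n + 1)
  measurable_invFun := measurable_pi_lambda _ fun n => measurable_pi_apply (n - 1)

lemma continuous_leftShift : Continuous leftShift :=
  continuous_pi fun n => continuous_apply (n + 1)

abbrev shiftSystem (ν : Measure (ℤ → Bool)) [IsProbabilityMeasure ν]
    (hν : MeasurePreserving leftShift ν ν) : MPSystem where
  X := ℤ → Bool
  μ := ν
  prob := inferInstance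
  T := leftShift
  mp := hν

section shiftSystem

variable (ν : Measure (ℤ → Bool)) [IsProbabilityMeasure ν] (hν : MeasurePreserving leftShift ν ν)

lemma shiftSystem_iter_apply (m : ℤ) (ω : ℤ → Bool) (j : ℤ) :
    (shiftSystem ν hν).iter m ω j = ω (j + m) := by
  induction m using Int.induction_on generalizing ω with
  | zero => rw [MPSystem.iter_zero_apply, add_zero]
  | succ k ih =>
    rw [MPSystem.iter_add_apply, MPSystem.iter_one_apply, ih]
    exact congrArg ω (add_assoc j k 1)
  | pred k ih =>
    rw [sub_eq_add_neg, MPSystem.iter_add_apply, MPSystem.iter_neg_one_apply, ih]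
    exact congrArg ω (by ring)

lemma continuous_shiftSystem_iter (m : ℤ) : Continuous ((shiftSystem ν hν).iter m) := by
  simp_rw [continuous_pi_iff, shiftSystem_iter_apply]
  exact fun j => continuous_apply (j + m)

end shiftSystem

namespace MPSystem

variable (𝒮 : MPSystem) (D : Set 𝒮.X)

noncomputable def itinerary (x : 𝒮.X) : ℤ → Bool := fun n => D.boolIndicator (𝒮.iter n x)

variable {D}

lemma measurable_itinerary (hD : MeasurableSet D) : Measurable (𝒮.itinerary D) :=
  measurable_pi_lambda _ fun n =>
    Measurable.ite ((𝒮.measurable_iter n) hD) measurable_const measurable_const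

lemma itinerary_iter (m : ℤ) (x : 𝒮.X) :
    𝒮.itinerary D (𝒮.iter m x) = fun j => 𝒮.itinerary D x (j + m) := by
  ext j
  rw [itinerary, itinerary, iter_add_apply]

lemma itinerary_T (x : 𝒮.X) : 𝒮.itinerary D (𝒮.T x) = leftShift (𝒮.itinerary D x) :=
  𝒮.itinerary_iter 1 x

lemma measurePreserving_leftShift_map_itinerary (hD : MeasurableSet D) :
    MeasurePreserving leftShift (𝒮.μ.map (𝒮.itinerary D)) (𝒮.μ.map (𝒮.itinerary D)) := by
  refine ⟨leftShift.measurable, ?_⟩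
  rw [Measure.map_map leftShift.measurable (𝒮.measurable_itinerary hD)]
  have hcomm : leftShift ∘ 𝒮.itinerary D = 𝒮.itinerary D ∘ 𝒮.T :=
    funext fun x => (𝒮.itinerary_T x).symm
  rw [hcomm, ← Measure.map_map (𝒮.measurable_itinerary hD) 𝒮.T.measurable, 𝒮.mp.map_eq]

lemma preimage_itinerary_inter_image_iter {ν : Measure (ℤ → Bool)} [IsProbabilityMeasure ν]
    (hν : MeasurePreserving leftShift ν ν) (n : ℤ) :
    𝒮.itinerary D ⁻¹' ({ω | ω 0 = true} ∩ (shiftSystem ν hν).iter n '' {ω | ω 0 = true})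
      = D ∩ 𝒮.iter n '' D := by
  rw [image_iter, image_iter]
  ext x
  simp only [mem_inter_iff, mem_preimage, mem_ofPred_eq, shiftSystem_iter_apply, itinerary,
    zero_add, ← mem_iff_boolIndicator, iter_zero_apply]

end MPSystem

lemma MeasureTheory.ProbabilityMeasure.isClosed_setOf_map_eq {Ω : Type*} [TopologicalSpace Ω]
    [MeasurableSpace Ω] [BorelSpace Ω] [HasOuterApproxClosed Ω] {f : Ω → Ω}
    (hf : Continuous f) :
    IsClosed {ν : ProbabilityMeasure Ω | ν.map hf.measurable.aemeasurable = ν} :=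
  isClosed_eq (ProbabilityMeasure.continuous_map hf) continuous_id

attribute [local instance] MPSystem.prob in
theorem MPSystem.exists_mapClusterPt_measure_inter_image_iter (𝒯 : ℕ → MPSystem)
    (D : ∀ k, Set (𝒯 k).X) (hD : ∀ k, MeasurableSet (D k)) :
    ∃ (𝒮 : MPSystem) (A : Set 𝒮.X), MeasurableSet A ∧ ∀ n : ℤ,
      MapClusterPt (𝒮.μ (A ∩ 𝒮.iter n '' A)) atTop
        fun k => (𝒯 k).μ (D k ∩ (𝒯 k).iter n '' D k) := by
  let νs k : ProbabilityMeasure (ℤ → Bool) :=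
    ⟨(𝒯 k).μ.map ((𝒯 k).itinerary (D k)), Measure.isProbabilityMeasure_map
      ((𝒯 k).measurable_itinerary (hD k)).aemeasurable⟩
  let 𝒰 : Ultrafilter ℕ := .of atTop
  obtain ⟨ν, -, hνs⟩ := isCompact_univ.ultrafilter_le_nhds (𝒰.map νs) (by simp)
  rw [Ultrafilter.coe_map] at hνs
  have hν : MeasurePreserving leftShift ν ν := by
    refine ⟨leftShift.measurable, ?_⟩
    rw [← ProbabilityMeasure.toMeasure_map _ leftShift.measurable.aemeasurable]
    refine congrArg ProbabilityMeasure.toMeasure ?_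
    refine (ProbabilityMeasure.isClosed_setOf_map_eq continuous_leftShift).mem_of_tendsto hνs
      (Eventually.of_forall fun k => ?_)
    exact Subtype.ext ((𝒯 k).measurePreserving_leftShift_map_itinerary (hD k)).map_eq
  let A : Set (ℤ → Bool) := {ω | ω 0 = true}
  have hA : IsClopen A := (isClopen_discrete {true}).preimage (continuous_apply 0)
  refine ⟨shiftSystem ν hν, A, hA.isOpen.measurableSet, fun n => ?_⟩
  have hAn : IsClopen (A ∩ (shiftSystem ν hν).iter n '' A) := by
    rw [MPSystem.image_iter]
    exact hA.inter (hA.preimage (continuous_shiftSystem_iter ν hν (-n)))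
  have hlim := ProbabilityMeasure.tendsto_measure_of_null_frontier_of_tendsto' hνs
    (E := A ∩ (shiftSystem ν hν).iter n '' A) (by simp [hAn.frontier_eq])
  have hνs_apply : ∀ k, (νs k : Measure (ℤ → Bool)) (A ∩ (shiftSystem ν hν).iter n '' A) =
      (𝒯 k).μ (D k ∩ (𝒯 k).iter n '' D k) := fun k => by
    rw [ProbabilityMeasure.coe_mk, Measure.map_apply ((𝒯 k).measurable_itinerary (hD k))
      hAn.isOpen.measurableSet, preimage_itinerary_inter_image_iter]
  simp only [hνs_apply] at hlim
  exact hlim.mapClusterPt.mono (Ultrafilter.of_le atTop)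

lemma isRecurrenceSet_of_forall_isDeltaRecurrenceSet {S : Set ℤ}
    (h : ∀ δ : ℝ, 0 < δ → ∃ F ⊆ S, IsDeltaRecurrenceSet δ F) : IsRecurrenceSet S := by
  intro 𝒮 D hD hμD
  obtain ⟨δ, -, hδ, hδD⟩ := ENNReal.lt_iff_exists_real_btwn.1 hμD
  obtain ⟨F, hFS, hF⟩ := h δ (ENNReal.ofReal_pos.1 hδ)
  obtain ⟨n, hnF, hn⟩ := hF 𝒮 D hD hδD
  exact ⟨n, hFS hnF, hn⟩

theorem IsRecurrenceSet.exists_finite_isDeltaRecurrenceSet {S : Set ℤ} (hS : IsRecurrenceSet S)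
    {δ : ℝ} (hδ : 0 < δ) : ∃ F : Set ℤ, F.Finite ∧ F ⊆ S ∧ IsDeltaRecurrenceSet δ F := by
  by_contra! h
  have hbad : ∀ k : ℕ, ∃ (𝒯 : MPSystem) (D : Set 𝒯.X), MeasurableSet D ∧
      ENNReal.ofReal δ < 𝒯.μ D ∧ ∀ n ∈ S ∩ Icc (-k : ℤ) k, 𝒯.μ (D ∩ 𝒯.iter n '' D) = 0 := by
    intro k
    simpa [IsDeltaRecurrenceSet] using h _ ((finite_Icc _ _).inter_of_right S) inter_subset_left
  choose 𝒯 D hD hδD hreturn using hbad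
  obtain ⟨𝒮, A, hA, hlim⟩ := MPSystem.exists_mapClusterPt_measure_inter_image_iter 𝒯 D hD
  have hδA : ENNReal.ofReal δ ≤ 𝒮.μ A := by
    have hlim₀ := hlim 0
    simp only [MPSystem.inter_image_iter_zero] at hlim₀
    exact isClosed_Ici.mem_of_mapClusterPt hlim₀ (Eventually.of_forall fun k => (hδD k).le)
  obtain ⟨n, hnS, hn⟩ := hS 𝒮 A hA ((ENNReal.ofReal_pos.2 hδ).trans_le hδA)
  refine hn.ne' (isClosed_singleton.mem_of_mapClusterPt (hlim n) ?_)
  filter_upwards [eventually_ge_atTop n.natAbs] with k hk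
  exact hreturn k n ⟨hnS, by omega, by omega⟩

/-- **Lemma (Forrest).** `S ⊆ ℤ` is a set of recurrence if and only if for every `δ > 0`
there is a finite set of `δ`-recurrence contained in `S`. -/
theorem isRecurrenceSet_iff_forall_delta_exists_finite (S : Set ℤ) :
    IsRecurrenceSet S ↔
      ∀ δ : ℝ, 0 < δ → ∃ F : Set ℤ, F.Finite ∧ F ⊆ S ∧ IsDeltaRecurrenceSet δ F := by
  refine ⟨fun hS δ hδ => hS.exists_finite_isDeltaRecurrenceSet hδ, fun h => ?_⟩
  refine isRecurrenceSet_of_forall_isDeltaRecurrenceSet fun δ hδ => ?_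
  obtain ⟨F, -, hFS, hF⟩ := h δ hδ
  exact ⟨F, hFS, hF⟩
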